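/- arXiv:2307.09652 — 3 statements merged into one kernel-verified Lean document; each statement's English description precedes it below -/
import Mathlib

section
/- There exist bimatrix games in which the gap between the exploiter's worst-case best-response value p_e = max_{y∈Δ(m)} min_{x∈X*} xᵀBy and its security value max_{y∈Δ(m)} min_{x∈Δ(n)} xᵀBy is arbitrarily large: specifically, for every c > 0 there is a 3×2 game (A,B) with p_e ≥ c and security value ≤ 0. -/
open Matrix

noncomputable def pay {n m : ℕ} (A : Matrix (Fin n) (Fin m) ℝ)
    (x : Fin n → ℝ) (y : Fin m → ℝ) : ℝ := x ⬝ᵥ (A *ᵥ y)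

noncomputable def worst {n m : ℕ} (A : Matrix (Fin n) (Fin m) ℝ) (x : Fin n → ℝ) : ℝ :=
  sInf (pay A x '' stdSimplex ℝ (Fin m))

noncomputable def maximinSet {n m : ℕ} (A : Matrix (Fin n) (Fin m) ℝ) : Set (Fin n → ℝ) :=
  {x | x ∈ stdSimplex ℝ (Fin n) ∧ ∀ x' ∈ stdSimplex ℝ (Fin n), worst A x' ≤ worst A x}

noncomputable def worstOver {n m : ℕ} (X : Set (Fin n → ℝ))
    (B : Matrix (Fin n) (Fin m) ℝ) (y : Fin m → ℝ) : ℝ :=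
  sInf ((fun x => pay B x y) '' X)

/-- `p_e = max_{y ∈ Δ(m)} min_{x ∈ X*} xᵀ B y`. -/
noncomputable def pE {n m : ℕ} (A B : Matrix (Fin n) (Fin m) ℝ) : ℝ :=
  sSup ((fun y => worstOver (maximinSet A) B y) '' stdSimplex ℝ (Fin m))

/-- The exploiter's unrestricted security value `max_{y ∈ Δ(m)} min_{x ∈ Δ(n)} xᵀ B y`. -/
noncomputable def securityE {n m : ℕ} (B : Matrix (Fin n) (Fin m) ℝ) : ℝ :=
  sSup ((fun y => worstOver (stdSimplex ℝ (Fin n)) B y) '' stdSimplex ℝ (Fin m))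

/-!
Take `A` with rows `(c, c), (c, c), (-1, -1)`: the victim's payoff does not depend on the
exploiter's column, and row 3 is strictly worse than rows 1 and 2, so every maximin strategy
puts no weight on row 3. With `B` having rows `(2c, -1), (c, -1), (-1, 0)`, the exploiter's first
column then earns at least `c` against every maximin strategy, whereas against an arbitrary
opponent row 3 holds every exploiter strategy to at most `0`.
-/

open Set

section General

variable {n m : ℕ}

lemma nonempty_stdSimplex_fin [NeZero m] : (stdSimplex ℝ (Fin m)).Nonempty :=
  ⟨Pi.single 0 1, single_mem_stdSimplex ℝ 0⟩

lemma continuous_pay_left (B : Matrix (Fin n) (Fin m) ℝ) (y : Fin m → ℝ) :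
    Continuous fun x => pay B x y :=
  continuous_id.dotProduct continuous_const

lemma continuous_pay_right (B : Matrix (Fin n) (Fin m) ℝ) (x : Fin n → ℝ) :
    Continuous (pay B x) :=
  continuous_const.dotProduct (continuous_const.matrix_mulVec continuous_id)

lemma bddBelow_pay_image {X : Set (Fin n → ℝ)} (hX : X ⊆ stdSimplex ℝ (Fin n))
    (B : Matrix (Fin n) (Fin m) ℝ) (y : Fin m → ℝ) :
    BddBelow ((fun x => pay B x y) '' X) :=
  ((isCompact_stdSimplex ℝ (Fin n)).bddBelow_image (continuous_pay_left B y).continuousOn).mono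
    (image_mono hX)

lemma worstOver_le_pay {X : Set (Fin n → ℝ)} (hX : X ⊆ stdSimplex ℝ (Fin n))
    {B : Matrix (Fin n) (Fin m) ℝ} {x : Fin n → ℝ} (y : Fin m → ℝ) (hx : x ∈ X) :
    worstOver X B y ≤ pay B x y :=
  csInf_le (bddBelow_pay_image hX B y) (mem_image_of_mem _ hx)

lemma le_worstOver {X : Set (Fin n → ℝ)} (hX : X.Nonempty) {B : Matrix (Fin n) (Fin m) ℝ}
    {y : Fin m → ℝ} {a : ℝ} (h : ∀ x ∈ X, a ≤ pay B x y) : a ≤ worstOver X B y :=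
  le_csInf (hX.image _) (forall_mem_image.2 h)

lemma bddAbove_worstOver_image {X : Set (Fin n → ℝ)} (hX : X ⊆ stdSimplex ℝ (Fin n))
    (hne : X.Nonempty) (B : Matrix (Fin n) (Fin m) ℝ) :
    BddAbove ((fun y => worstOver X B y) '' stdSimplex ℝ (Fin m)) := by
  obtain ⟨x, hx⟩ := hne
  obtain ⟨b, hb⟩ :=
    (isCompact_stdSimplex ℝ (Fin m)).bddAbove_image (continuous_pay_right B x).continuousOn
  exact ⟨b, forall_mem_image.2 fun y hy =>
    (worstOver_le_pay hX y hx).trans (hb (mem_image_of_mem _ hy))⟩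

lemma worstOver_le_pE {A B : Matrix (Fin n) (Fin m) ℝ} (hne : (maximinSet A).Nonempty)
    {y : Fin m → ℝ} (hy : y ∈ stdSimplex ℝ (Fin m)) :
    worstOver (maximinSet A) B y ≤ pE A B :=
  le_csSup (bddAbove_worstOver_image (fun _ hx => hx.1) hne B) (mem_image_of_mem _ hy)

lemma securityE_le [NeZero m] {B : Matrix (Fin n) (Fin m) ℝ} {a : ℝ}
    (h : ∀ y ∈ stdSimplex ℝ (Fin m), ∃ x ∈ stdSimplex ℝ (Fin n), pay B x y ≤ a) :
    securityE B ≤ a :=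
  csSup_le (nonempty_stdSimplex_fin.image _) <| forall_mem_image.2 fun y hy =>
    let ⟨_, hx, hxy⟩ := h y hy
    (worstOver_le_pay subset_rfl y hx).trans hxy

lemma pay_replicateCol (r x : Fin n → ℝ) {y : Fin m → ℝ} (hy : y ∈ stdSimplex ℝ (Fin m)) :
    pay (replicateCol (Fin m) r) x y = x ⬝ᵥ r := by
  rw [pay, dotProduct_mulVec, mulVec_replicateCol_eq_const]
  simp [dotProduct, ← Finset.mul_sum, hy.2]

lemma worst_replicateCol [NeZero m] (r x : Fin n → ℝ) :
    worst (replicateCol (Fin m) r) x = x ⬝ᵥ r := by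
  rw [worst, image_congr fun y hy => pay_replicateCol r x hy,
    nonempty_stdSimplex_fin.image_const, csInf_singleton]

lemma mem_maximinSet_replicateCol [NeZero m] {r x : Fin n → ℝ} :
    x ∈ maximinSet (replicateCol (Fin m) r) ↔
      x ∈ stdSimplex ℝ (Fin n) ∧ ∀ x' ∈ stdSimplex ℝ (Fin n), x' ⬝ᵥ r ≤ x ⬝ᵥ r := by
  simp only [maximinSet, worst_replicateCol]
  rfl

end General

section Example

variable {c : ℝ}

def victimPayoff (c : ℝ) : Matrix (Fin 3) (Fin 2) ℝ := replicateCol (Fin 2) ![c, c, -1]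

def exploiterPayoff (c : ℝ) : Matrix (Fin 3) (Fin 2) ℝ := !![2 * c, -1; c, -1; -1, 0]

lemma sum_fin_three_of_mem_stdSimplex {x : Fin 3 → ℝ} (hx : x ∈ stdSimplex ℝ (Fin 3)) :
    x 0 + x 1 + x 2 = 1 := by
  simpa [Fin.sum_univ_three] using hx.2

lemma dotProduct_victimRow (x : Fin 3 → ℝ) : x ⬝ᵥ ![c, c, -1] = c * (x 0 + x 1) - x 2 := by
  simp only [dotProduct, Fin.sum_univ_three, cons_val_zero, cons_val_one, cons_val]
  ring

lemma dotProduct_victimRow_le (hc : 0 ≤ c) {x : Fin 3 → ℝ} (hx : x ∈ stdSimplex ℝ (Fin 3)) :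
    x ⬝ᵥ ![c, c, -1] ≤ c - x 2 := by
  rw [dotProduct_victimRow]
  nlinarith [sum_fin_three_of_mem_stdSimplex hx, hx.1 2]

lemma single_zero_mem_maximinSet_victimPayoff (hc : 0 ≤ c) :
    Pi.single 0 1 ∈ maximinSet (victimPayoff c) := by
  refine mem_maximinSet_replicateCol.2 ⟨single_mem_stdSimplex ℝ 0, fun x hx => ?_⟩
  rw [single_one_dotProduct, cons_val_zero]
  linarith [dotProduct_victimRow_le hc hx, hx.1 2]

lemma apply_two_eq_zero_of_mem_maximinSet_victimPayoff (hc : 0 ≤ c) {x : Fin 3 → ℝ}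
    (hx : x ∈ maximinSet (victimPayoff c)) : x 2 = 0 := by
  obtain ⟨hx, hmax⟩ := mem_maximinSet_replicateCol.1 hx
  have hc_le : c ≤ x ⬝ᵥ ![c, c, -1] := by
    simpa [single_one_dotProduct] using hmax _ (single_mem_stdSimplex ℝ 0)
  linarith [dotProduct_victimRow_le hc hx, hx.1 2]

lemma pay_exploiterPayoff_single_zero (x : Fin 3 → ℝ) :
    pay (exploiterPayoff c) x (Pi.single 0 1) = 2 * c * x 0 + c * x 1 - x 2 := by
  simp only [pay, dotProduct, exploiterPayoff, mulVec_single, MulOpposite.op_one, Pi.smul_apply,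
    col_apply, of_apply, cons_val', cons_val_zero, cons_val_fin_one, one_smul, Fin.sum_univ_three,
    cons_val_one, cons_val]
  ring

lemma pay_exploiterPayoff_single_two (y : Fin 2 → ℝ) :
    pay (exploiterPayoff c) (Pi.single 2 1) y = -y 0 := by
  simp [pay, exploiterPayoff, mulVec, dotProduct, Fin.sum_univ_two, Fin.sum_univ_three]

lemma le_pay_exploiterPayoff_of_mem_maximinSet (hc : 0 ≤ c) {x : Fin 3 → ℝ}
    (hx : x ∈ maximinSet (victimPayoff c)) :
    c ≤ pay (exploiterPayoff c) x (Pi.single 0 1) := by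
  have h2 := apply_two_eq_zero_of_mem_maximinSet_victimPayoff hc hx
  have h1 : x 1 = 1 - x 0 := by linarith [sum_fin_three_of_mem_stdSimplex hx.1]
  rw [pay_exploiterPayoff_single_zero, h1, h2]
  nlinarith [mul_nonneg hc (hx.1.1 0)]

end Example

/-- the gap between `p_e` and the exploiter's security value can be
arbitrarily large: for every `c > 0` there is a `3×2` game with `p_e ≥ c` and
security value `≤ 0`. -/
theorem pE_security_gap_unbounded :
    ∀ c : ℝ, 0 < c → ∃ A B : Matrix (Fin 3) (Fin 2) ℝ,
      c ≤ pE A B ∧ securityE B ≤ 0 := by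
  intro c hc
  have hne : (maximinSet (victimPayoff c)).Nonempty :=
    ⟨_, single_zero_mem_maximinSet_victimPayoff hc.le⟩
  refine ⟨victimPayoff c, exploiterPayoff c, ?_, ?_⟩
  · calc c ≤ worstOver (maximinSet (victimPayoff c)) (exploiterPayoff c) (Pi.single 0 1) :=
          le_worstOver hne fun _ => le_pay_exploiterPayoff_of_mem_maximinSet hc.le
      _ ≤ pE (victimPayoff c) (exploiterPayoff c) :=
          worstOver_le_pE hne (single_mem_stdSimplex ℝ 0)
  · refine securityE_le fun y hy => ⟨_, single_mem_stdSimplex ℝ 2, ?_⟩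
    rw [pay_exploiterPayoff_single_two]
    linarith [hy.1 0]
end

section
/- The exploiter's problem max_{y∈Δ(m)} min_{x∈X*} xᵀBy has the same optimal value as the single linear program: maximize z*·1ᵀw − α over y ∈ Δ(m), w ∈ ℝ^m_{≥0}, α ∈ ℝ subject to α + e_iᵀBy − e_iᵀAw ≥ 0 for all i ∈ [n]. -/
open Matrix

noncomputable def payPure {n m : ℕ} (A : Matrix (Fin n) (Fin m) ℝ)
    (x : Fin n → ℝ) (j : Fin m) : ℝ := x ⬝ᵥ (A *ᵥ Pi.single j 1)

/-- `z* = max_{x ∈ Δ(n)} min_{j ∈ [m]} (xᵀA)_j`. -/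
noncomputable def zStar {n m : ℕ} (A : Matrix (Fin n) (Fin m) ℝ) : ℝ :=
  sSup ((fun x => sInf (Set.range (payPure A x))) '' stdSimplex ℝ (Fin n))

/-- The polytope `X* = {x ∈ Δ(n) : z* ≤ xᵀAe_j ∀ j}` of victim maximin strategies. -/
noncomputable def Xstar {n m : ℕ} (A : Matrix (Fin n) (Fin m) ℝ) : Set (Fin n → ℝ) :=
  {x | x ∈ stdSimplex ℝ (Fin n) ∧ ∀ j : Fin m, zStar A ≤ payPure A x j}

/-! For fixed `y`, the inner value `min_{x ∈ X*} xᵀBy` is a linear program over the simplex whose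
dual has exactly the constraints of the joint program in `(w, α)`. Strong duality makes the two
value sets have the same upper bounds, hence the same supremum.

Strong duality comes from Sion's minimax theorem for the Lagrangian
`L(x, w) = xᵀc + Σⱼ wⱼ (z − (xᵀA)ⱼ)` on `Δ × ℝ^m_{≥0}`, taken in `EReal` because
`sup_w L(x, w) = +∞` off the feasible set. Any `b` below the primal value then lies below
`min_{x ∈ Δ} L(x, w)` for some `w ≥ 0`, and evaluating at the vertices of `Δ` shows that
`α = z Σⱼ wⱼ − b` is dual feasible with objective value `b`. -/

/-- The junk value `0` of `Real.sSup` (empty or unbounded set) is also determined by the upper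
bounds: they are `univ`, respectively `∅`. -/
theorem Real.sSup_eq_of_upperBounds_eq {s t : Set ℝ} (h : upperBounds s = upperBounds t) :
    sSup s = sSup t := by
  have nonempty_iff (u : Set ℝ) : u.Nonempty ↔ upperBounds u ≠ Set.univ := by
    refine ⟨fun ⟨a, ha⟩ hu => ?_, fun hu => Set.nonempty_iff_ne_empty.2 fun he => hu (by simp [he])⟩
    have : a - 1 ∈ upperBounds u := hu ▸ Set.mem_univ _
    linarith [this ha]
  by_cases hs : s.Nonempty ∧ BddAbove s
  · have ht : t.Nonempty ∧ BddAbove t := by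
      rw [nonempty_iff, BddAbove, ← h, ← nonempty_iff]; exact hs
    refine (isLUB_csSup hs.1 hs.2).unique ?_
    rw [IsLUB, h]
    exact isLUB_csSup ht.1 ht.2
  · have ht : ¬ (t.Nonempty ∧ BddAbove t) := by
      rwa [nonempty_iff, BddAbove, ← h, ← nonempty_iff]
    rw [not_and_or] at hs ht
    have zero (u : Set ℝ) : ¬ u.Nonempty ∨ ¬ BddAbove u → sSup u = 0 := by
      rintro (hu | hu)
      · rw [Set.not_nonempty_iff_eq_empty.1 hu, Real.sSup_empty]
      · exact Real.sSup_of_not_bddAbove hu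
    rw [zero s hs, zero t ht]

theorem upperBounds_image_eq_of_isLUB {α β : Type*} [Preorder β] {s : Set α} {V : α → β}
    {D : α → Set β} (h : ∀ y ∈ s, IsLUB (D y) (V y)) :
    upperBounds (V '' s) = upperBounds {v | ∃ y ∈ s, v ∈ D y} := by
  ext u
  constructor
  · rintro hu v ⟨y, hy, hv⟩
    exact ((h y hy).1 hv).trans (hu ⟨y, hy, rfl⟩)
  · rintro hu _ ⟨y, hy, rfl⟩
    exact (h y hy).2 fun v hv => hu ⟨y, hy, hv⟩

section SimplexLP

variable {ι κ : Type*} [Fintype ι] (A : Matrix ι κ ℝ) (c : ι → ℝ) (z : ℝ)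

def guaranteeSet : Set (ι → ℝ) :=
  {x | x ∈ stdSimplex ℝ ι ∧ ∀ j, z ≤ (x ᵥ* A) j}

theorem bddBelow_image_dotProduct_guaranteeSet : BddBelow ((· ⬝ᵥ c) '' guaranteeSet A z) :=
  ((isCompact_stdSimplex ℝ ι).bddBelow_image (by fun_prop : Continuous (· ⬝ᵥ c)).continuousOn)
    |>.mono (Set.image_mono fun _ hx => hx.1)

variable [Fintype κ]

def dualValues : Set ℝ :=
  {v | ∃ w : κ → ℝ, ∃ α : ℝ, (∀ j, 0 ≤ w j) ∧ (∀ i, 0 ≤ α + c i - (A *ᵥ w) i) ∧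
    v = z * ∑ j, w j - α}

def lagrangian (x : ι → ℝ) (w : κ → ℝ) : ℝ :=
  w ⬝ᵥ (fun j => z - (x ᵥ* A) j) + x ⬝ᵥ c

variable {A c z}

theorem lagrangian_eq_dotProduct_add (x : ι → ℝ) (w : κ → ℝ) :
    lagrangian A c z x w = x ⬝ᵥ (c - A *ᵥ w) + z * ∑ j, w j := by
  rw [lagrangian, dotProduct_sub, dotProduct_mulVec]
  simp only [dotProduct, mul_sub, Finset.sum_sub_distrib, Finset.mul_sum]
  simp only [mul_comm]
  ring

theorem lagrangian_single [DecidableEq ι] (i : ι) (w : κ → ℝ) :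
    lagrangian A c z (Pi.single i 1) w = c i - (A *ᵥ w) i + z * ∑ j, w j := by
  rw [lagrangian_eq_dotProduct_add, single_one_dotProduct, Pi.sub_apply]

theorem lagrangian_le_of_mem_guaranteeSet {x : ι → ℝ} (hx : x ∈ guaranteeSet A z) {w : κ → ℝ}
    (hw : ∀ j, 0 ≤ w j) : lagrangian A c z x w ≤ x ⬝ᵥ c :=
  add_le_of_nonpos_left <| Finset.sum_nonpos fun j _ =>
    mul_nonpos_of_nonneg_of_nonpos (hw j) (sub_nonpos.2 (hx.2 j))

theorem le_lagrangian_of_feasible {x : ι → ℝ} (hx : x ∈ stdSimplex ℝ ι) {w : κ → ℝ} {α : ℝ}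
    (hα : ∀ i, 0 ≤ α + c i - (A *ᵥ w) i) : z * ∑ j, w j - α ≤ lagrangian A c z x w := by
  have : -α ≤ x ⬝ᵥ (c - A *ᵥ w) :=
    calc -α = ∑ i, x i * -α := by rw [← Finset.sum_mul, hx.2, one_mul]
      _ ≤ x ⬝ᵥ (c - A *ᵥ w) := Finset.sum_le_sum fun i _ =>
          mul_le_mul_of_nonneg_left (by rw [Pi.sub_apply]; linarith [hα i]) (hx.1 i)
  rw [lagrangian_eq_dotProduct_add]
  linarith

theorem exists_le_lagrangian_of_lt {x : ι → ℝ} {j : κ}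
    (hj : (x ᵥ* A) j < z) (M : ℝ) : ∃ w : κ → ℝ, (∀ j, 0 ≤ w j) ∧ M ≤ lagrangian A c z x w := by
  classical
  set t := |M - x ⬝ᵥ c| / (z - (x ᵥ* A) j)
  have hgap : 0 < z - (x ᵥ* A) j := sub_pos.2 hj
  refine ⟨Pi.single j t, fun k => ?_, ?_⟩
  · rcases eq_or_ne k j with rfl | hk
    · simpa using div_nonneg (abs_nonneg _) hgap.le
    · simp [hk]
  · have : lagrangian A c z x (Pi.single j t) = |M - x ⬝ᵥ c| + x ⬝ᵥ c := by
      rw [lagrangian, single_dotProduct, div_mul_cancel₀ _ hgap.ne']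
    rw [this]
    linarith [le_abs_self (M - x ⬝ᵥ c)]

theorem quasilinearOn_coe_dotProduct_add {s : Set (ι → ℝ)} (hs : Convex ℝ s) (u : ι → ℝ)
    (a : ℝ) : QuasilinearOn ℝ s fun x => ((x ⬝ᵥ u + a : ℝ) : EReal) := by
  set g : (ι → ℝ) → ℝ := fun x => x ⬝ᵥ u + a
  have affine : ∀ x y : ι → ℝ, ∀ p q : ℝ, p + q = 1 → g (p • x + q • y) = p • g x + q • g y := by
    intro x y p q hpq
    simp only [g, add_dotProduct, smul_dotProduct, smul_eq_mul]
    linear_combination a * hpq.symm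
  have hconvex : ConvexOn ℝ s g := ⟨hs, fun x _ y _ p q _ _ hpq => (affine x y p q hpq).le⟩
  have hconcave : ConcaveOn ℝ s g := ⟨hs, fun x _ y _ p q _ _ hpq => (affine x y p q hpq).ge⟩
  exact ⟨hconvex.quasiconvexOn.monotone_comp (g := Real.toEReal) EReal.coe_strictMono.monotone,
    hconcave.quasiconcaveOn.monotone_comp (g := Real.toEReal) EReal.coe_strictMono.monotone⟩

theorem continuous_coe_dotProduct_add (u : ι → ℝ) (a : ℝ) :
    Continuous fun x : ι → ℝ => ((x ⬝ᵥ u + a : ℝ) : EReal) :=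
  continuous_coe_real_ereal.comp (by fun_prop)

theorem coe_sInf_le_iSup_lagrangian {x : ι → ℝ} (hx : x ∈ stdSimplex ℝ ι) :
    ((sInf ((· ⬝ᵥ c) '' guaranteeSet A z) : ℝ) : EReal) ≤
      ⨆ w ∈ Set.Ici (0 : κ → ℝ), (lagrangian A c z x w : EReal) := by
  by_cases hxP : ∀ j, z ≤ (x ᵥ* A) j
  · refine le_trans ?_ (le_biSup (fun w => (lagrangian A c z x w : EReal)) (Set.mem_Ici.2 le_rfl))
    have : lagrangian A c z x 0 = x ⬝ᵥ c := by simp [lagrangian]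
    rw [EReal.coe_le_coe_iff, this]
    exact csInf_le (bddBelow_image_dotProduct_guaranteeSet A c z) (Set.mem_image_of_mem _ ⟨hx, hxP⟩)
  · push Not at hxP
    obtain ⟨j, hj⟩ := hxP
    obtain ⟨w, hw, hle⟩ :=
      exists_le_lagrangian_of_lt (c := c) hj (sInf ((· ⬝ᵥ c) '' guaranteeSet A z))
    exact (EReal.coe_le_coe_iff.2 hle).trans
      (le_biSup (fun w => (lagrangian A c z x w : EReal)) (show 0 ≤ w from hw))

theorem Iio_subset_dualValues (hP : (guaranteeSet A z).Nonempty) :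
    Set.Iio (sInf ((· ⬝ᵥ c) '' guaranteeSet A z)) ⊆ dualValues A c z := by
  classical
  intro b hb
  set f : (ι → ℝ) → (κ → ℝ) → EReal := fun x w => (lagrangian A c z x w : EReal)
  have affine_in_x (w : κ → ℝ) :
      (f · w) = fun x => ((x ⬝ᵥ (c - A *ᵥ w) + z * ∑ j, w j : ℝ) : EReal) := by
    simp only [f, lagrangian_eq_dotProduct_add]
  obtain ⟨x₀, hx₀⟩ := hP
  have minimax := Sion.minimax' (f := f) ⟨x₀, hx₀.1⟩ (convex_stdSimplex ℝ ι)
    (isCompact_stdSimplex ℝ ι)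
    (fun w _ => affine_in_x w ▸
      (continuous_coe_dotProduct_add _ _).lowerSemicontinuous.lowerSemicontinuousOn _)
    (fun w _ => affine_in_x w ▸
      (quasilinearOn_coe_dotProduct_add (convex_stdSimplex ℝ ι) _ _).1)
    (convex_Ici 0)
    (fun x _ => (continuous_coe_dotProduct_add _ _).upperSemicontinuous.upperSemicontinuousOn _)
    (fun x _ => (quasilinearOn_coe_dotProduct_add (convex_Ici 0) _ _).2)
  have hprimal : ((sInf ((· ⬝ᵥ c) '' guaranteeSet A z) : ℝ) : EReal) ≤
      ⨆ w ∈ Set.Ici 0, ⨅ x ∈ stdSimplex ℝ ι, f x w :=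
    minimax ▸ le_iInf₂ fun x hx => coe_sInf_le_iSup_lagrangian hx
  obtain ⟨w, hw, hbw⟩ := lt_biSup_iff.1 ((EReal.coe_lt_coe_iff.2 hb).trans_le hprimal)
  refine ⟨w, z * ∑ j, w j - b, hw, fun i => ?_, by ring⟩
  have := hbw.trans_le (biInf_le _ (single_mem_stdSimplex ℝ i))
  rw [EReal.coe_lt_coe_iff, lagrangian_single] at this
  linarith

theorem isLUB_dualValues (hP : (guaranteeSet A z).Nonempty) :
    IsLUB (dualValues A c z) (sInf ((· ⬝ᵥ c) '' guaranteeSet A z)) := by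
  refine ⟨?_, fun u hu => le_of_forall_lt_imp_le_of_dense fun b hb =>
    hu (Iio_subset_dualValues hP hb)⟩
  rintro _ ⟨w, α, hw, hα, rfl⟩
  refine le_csInf (hP.image _) ?_
  rintro _ ⟨x, hx, rfl⟩
  exact (le_lagrangian_of_feasible hx.1 hα).trans (lagrangian_le_of_mem_guaranteeSet hx hw)

end SimplexLP

section Exploiter

variable {n m : ℕ} (A : Matrix (Fin n) (Fin m) ℝ)

theorem payPure_eq_vecMul (x : Fin n → ℝ) (j : Fin m) : payPure A x j = (x ᵥ* A) j := by
  rw [payPure, dotProduct_mulVec, dotProduct_single_one]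

theorem Xstar_eq_guaranteeSet : Xstar A = guaranteeSet A (zStar A) := by
  simp only [Xstar, guaranteeSet, payPure_eq_vecMul]

theorem Xstar_nonempty (hn : 0 < n) : (Xstar A).Nonempty := by
  set g : (Fin n → ℝ) → ℝ := fun x => sInf (Set.range (payPure A x))
  have hg : UpperSemicontinuous g :=
    upperSemicontinuous_ciInf (fun x => (Set.finite_range _).bddBelow) fun j =>
      Continuous.upperSemicontinuous (by simp only [payPure_eq_vecMul]; fun_prop)
  obtain ⟨x₀, hx₀, hmax⟩ := (hg.upperSemicontinuousOn _).exists_isMaxOn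
    ⟨_, single_mem_stdSimplex ℝ ⟨0, hn⟩⟩ (isCompact_stdSimplex ℝ _)
  have hz : zStar A = g x₀ := (hmax.isLUB hx₀).csSup_eq ⟨_, Set.mem_image_of_mem g hx₀⟩
  exact ⟨x₀, hx₀, fun j => hz ▸ ciInf_le (Set.finite_range _).bddBelow j⟩

end Exploiter

theorem exploiter_LP_value_general {n m : ℕ} (hn : 0 < n)
    (A B : Matrix (Fin n) (Fin m) ℝ) :
    sSup ((fun y => sInf ((fun x => pay B x y) '' Xstar A)) '' stdSimplex ℝ (Fin m)) =
    sSup {v : ℝ | ∃ y ∈ stdSimplex ℝ (Fin m), ∃ w : Fin m → ℝ, ∃ α : ℝ,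
      (∀ j, 0 ≤ w j) ∧ (∀ i : Fin n, 0 ≤ α + (B *ᵥ y) i - (A *ᵥ w) i) ∧
      v = zStar A * (∑ j, w j) - α} := by
  have hX := Xstar_nonempty A hn
  rw [Xstar_eq_guaranteeSet] at hX ⊢
  exact Real.sSup_eq_of_upperBounds_eq <| upperBounds_image_eq_of_isLUB
    (D := fun y => dualValues A (B *ᵥ y) (zStar A)) fun y _ => isLUB_dualValues hX

/-- the exploiter's max-min problem `max_{y ∈ Δ(m)} min_{x ∈ X*} xᵀBy`
has the same optimal value as the single LP maximizing `z*·1ᵀw − α` over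
`y ∈ Δ(m)`, `w ≥ 0`, `α ∈ ℝ` subject to `α + e_iᵀBy − e_iᵀAw ≥ 0` for all `i`. -/
theorem exploiter_LP_value {n m : ℕ} (hn : 0 < n) (hm : 0 < m)
    (A B : Matrix (Fin n) (Fin m) ℝ) :
    sSup ((fun y => sInf ((fun x => pay B x y) '' Xstar A)) '' stdSimplex ℝ (Fin m)) =
    sSup {v : ℝ | ∃ y ∈ stdSimplex ℝ (Fin m), ∃ w : Fin m → ℝ, ∃ α : ℝ,
      (∀ j, 0 ≤ w j) ∧ (∀ i : Fin n, 0 ≤ α + (B *ᵥ y) i - (A *ᵥ w) i) ∧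
      v = zStar A * (∑ j, w j) - α} :=
  exploiter_LP_value_general hn A B
end

section
/- If a pair of Markovian policies (π*, ν*) is a VISER solution for every stage game (h, s) of a finite-horizon Markov game (i.e., it is Markov-perfect VISER), then it is also a VISER solution of the whole game viewed from the initial distribution, i.e., π* ∈ argmax_π min_ν V^{π,ν}_v and ν* best-responds in the worst case to the set of Markov-perfect maximin victim policies. -/
open Matrix

/-- A finite-horizon two-player Markov game (victim reward `R`, exploiter reward `Re`,
transition kernel `P`, horizon `H`). Only steps `h < H` are relevant. -/
structure MarkovGame (S : Type) [Fintype S] (n m : ℕ) where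
  H : ℕ
  R : ℕ → S → Fin n → Fin m → ℝ
  Re : ℕ → S → Fin n → Fin m → ℝ
  P : ℕ → S → Fin n → Fin m → S → ℝ
  P_nonneg : ∀ h s a b s', 0 ≤ P h s a b s'
  P_sum : ∀ h s a b, ∑ s', P h s a b s' = 1

variable {S : Type} [Fintype S] {n m : ℕ}

/-- Expected cumulative reward (w.r.t. the reward function `RW`) from step `h`
onward starting at `s`, under Markovian policies `π, ν`. -/
noncomputable def Val (G : MarkovGame S n m) (RW : ℕ → S → Fin n → Fin m → ℝ)
    (π : ℕ → S → Fin n → ℝ) (ν : ℕ → S → Fin m → ℝ) (h : ℕ) (s : S) : ℝ :=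
  if hH : h < G.H then
    ∑ a, ∑ b, π h s a * ν h s b *
      (RW h s a b + ∑ s', G.P h s a b s' * Val G RW π ν (h + 1) s')
  else 0
termination_by G.H - h
decreasing_by omega

/-- The set of Markovian victim policies. -/
def ViP (S : Type) (n : ℕ) : Set (ℕ → S → Fin n → ℝ) :=
  {π | ∀ h s, π h s ∈ stdSimplex ℝ (Fin n)}

/-- The set of Markovian exploiter policies. -/
def ExP (S : Type) (m : ℕ) : Set (ℕ → S → Fin m → ℝ) :=
  {ν | ∀ h s, ν h s ∈ stdSimplex ℝ (Fin m)}

/-- The victim's maximin stage value `V*_{hv}(s)`. -/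
noncomputable def VstarV (G : MarkovGame S n m) (h : ℕ) (s : S) : ℝ :=
  sSup ((fun π => sInf ((fun ν => Val G G.R π ν h s) '' ExP S m)) '' ViP S n)

/-- `Π*_{hs}`: victim policies that are maximin for the stage game at `(h, s)`. -/
noncomputable def PiStar (G : MarkovGame S n m) (h : ℕ) (s : S) :
    Set (ℕ → S → Fin n → ℝ) :=
  {π | π ∈ ViP S n ∧ ∀ π' ∈ ViP S n,
    sInf ((fun ν => Val G G.R π' ν h s) '' ExP S m) ≤
      sInf ((fun ν => Val G G.R π ν h s) '' ExP S m)}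

/-- `Π*_{hs} ∩ ⋂_{k > h, s'} Π*_{ks'}`: maximin at `(h,s)` and at all later stages. -/
noncomputable def TildePi (G : MarkovGame S n m) (h : ℕ) (s : S) :
    Set (ℕ → S → Fin n → ℝ) :=
  PiStar G h s ∩ ⋂ (k : ℕ) (_ : h < k) (s' : S), PiStar G k s'

/-- `N*_{hs}`: exploiter policies best-responding in the worst case over `TildePi`. -/
noncomputable def NStar (G : MarkovGame S n m) (h : ℕ) (s : S) :
    Set (ℕ → S → Fin m → ℝ) :=
  {ν | ν ∈ ExP S m ∧ ∀ ν' ∈ ExP S m,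
    sInf ((fun π => Val G G.Re π ν' h s) '' TildePi G h s) ≤
      sInf ((fun π => Val G G.Re π ν h s) '' TildePi G h s)}

/-!
Both halves are dynamic programming. For a fixed victim policy, a single Markov exploiter policy
minimizes the victim's value simultaneously at every stage and state (a uniform best response),
so the worst case of a `μ`-average is the `μ`-average of the stagewise worst cases, and maximin at
every `(0, s)` gives maximin for the average. For the exploiter, let `W*` be the maximin value
function. A victim policy is maximin at `(h, s)` and at all later stages iff it plays, from
`(h, s)` on, actions securing `W*` against the continuation `W*`. These action sets are compact,
so backward induction against a fixed exploiter policy yields one policy in `⋂ Π*` minimizing the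
exploiter's value over every `TildePi h s` at once; averaging the stagewise `N*` inequalities then
gives the claim.
-/

theorem backward_induction {H : ℕ} {P : ℕ → Prop} (base : ∀ h, H ≤ h → P h)
    (step : ∀ h < H, P (h + 1) → P h) (h : ℕ) : P h :=
  if hh : h < H then step h hh (backward_induction base step (h + 1)) else base h (not_lt.1 hh)
termination_by H - h

theorem IsMinOn.isLeast_image {ι α : Type*} [Preorder α] {f : ι → α} {A : Set ι} {x : ι}
    (hf : IsMinOn f A x) (hx : x ∈ A) : IsLeast (f '' A) (f x) :=
  ⟨⟨x, hx, rfl⟩, by rintro _ ⟨y, hy, rfl⟩; exact isMinOn_iff.1 hf y hy⟩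

theorem IsMinOn.csInf_image_eq {ι : Type*} {f : ι → ℝ} {A : Set ι} {x : ι}
    (hf : IsMinOn f A x) (hx : x ∈ A) : sInf (f '' A) = f x :=
  (hf.isLeast_image hx).csInf_eq

theorem isMinOn_sum_mul {ι T : Type*} [Fintype T] {A : Set ι} {f : ι → T → ℝ} {x : ι}
    {μ : T → ℝ} (hμ : ∀ t, 0 ≤ μ t) (hf : ∀ t, IsMinOn (fun y => f y t) A x) :
    IsMinOn (fun y => ∑ t, μ t * f y t) A x :=
  isMinOn_iff.2 fun y hy => Finset.sum_le_sum fun t _ =>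
    mul_le_mul_of_nonneg_left (isMinOn_iff.1 (hf t) y hy) (hμ t)

section DynamicProgramming

variable {T X : Type*} (H : ℕ) (Φ : ℕ → T → X → (T → ℝ) → ℝ)

noncomputable def policyValue (σ : ℕ → T → X) (h : ℕ) (t : T) : ℝ :=
  if h < H then Φ h t (σ h t) (fun t' => policyValue σ (h + 1) t') else 0
termination_by H - h

noncomputable def optimalValue (C : ℕ → T → Set X) (h : ℕ) (t : T) : ℝ :=
  if h < H then sInf ((fun x => Φ h t x (fun t' => optimalValue C (h + 1) t')) '' C h t) else 0
termination_by H - h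

variable {H Φ}

theorem policyValue_of_lt {σ : ℕ → T → X} {h : ℕ} (hh : h < H) (t : T) :
    policyValue H Φ σ h t = Φ h t (σ h t) (policyValue H Φ σ (h + 1)) := by
  rw [policyValue, if_pos hh]

theorem policyValue_of_le {σ : ℕ → T → X} {h : ℕ} (hh : H ≤ h) (t : T) :
    policyValue H Φ σ h t = 0 := by
  rw [policyValue, if_neg (not_lt.2 hh)]

theorem optimalValue_of_lt {C : ℕ → T → Set X} {h : ℕ} (hh : h < H) (t : T) :
    optimalValue H Φ C h t = sInf ((fun x => Φ h t x (optimalValue H Φ C (h + 1))) '' C h t) := by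
  rw [optimalValue, if_pos hh]

theorem optimalValue_of_le {C : ℕ → T → Set X} {h : ℕ} (hh : H ≤ h) (t : T) :
    optimalValue H Φ C h t = 0 := by
  rw [optimalValue, if_neg (not_lt.2 hh)]

/-- The only constraints on `τ` that the value of `τ` at `(h, t)` depends on. -/
def IsAdmissibleFrom (C : ℕ → T → Set X) (h : ℕ) (t : T) (τ : ℕ → T → X) : Prop :=
  τ h t ∈ C h t ∧ ∀ k > h, ∀ t', τ k t' ∈ C k t'

theorem exists_isMinOn_policyValue [TopologicalSpace X] {C : ℕ → T → Set X}
    (hC : ∀ h t, IsCompact (C h t)) (hne : ∀ h t, (C h t).Nonempty)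
    (hcont : ∀ h t V, ContinuousOn (fun x => Φ h t x V) (C h t)) :
    ∃ σ : ℕ → T → X, ∀ h t, σ h t ∈ C h t ∧
      IsMinOn (fun x => Φ h t x (policyValue H Φ σ (h + 1))) (C h t) (σ h t) := by
  choose σ hσC hσmin using fun h t =>
    (hC h t).exists_isMinOn (hne h t) (hcont h t (optimalValue H Φ C (h + 1)))
  have hval : ∀ h, policyValue H Φ σ h = optimalValue H Φ C h := by
    refine backward_induction (H := H) (fun h hh => ?_) (fun h hh ih => ?_)
    · funext t
      rw [policyValue_of_le hh, optimalValue_of_le hh]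
    · funext t
      rw [policyValue_of_lt hh, optimalValue_of_lt hh, ih,
        ((hσmin h t).csInf_image_eq (hσC h t))]
  exact ⟨σ, fun h t => ⟨hσC h t, by rw [hval]; exact hσmin h t⟩⟩

theorem policyValue_le_of_isMinOn {C : ℕ → T → Set X}
    (hmono : ∀ h t, ∀ x ∈ C h t, Monotone (Φ h t x)) {σ : ℕ → T → X}
    (hσ : ∀ h t, IsMinOn (fun x => Φ h t x (policyValue H Φ σ (h + 1))) (C h t) (σ h t)) :
    ∀ h t τ, IsAdmissibleFrom C h t τ → policyValue H Φ σ h t ≤ policyValue H Φ τ h t := by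
  refine backward_induction (H := H) (fun h hh t τ _ => ?_) (fun h hh ih t τ hτ => ?_)
  · rw [policyValue_of_le hh, policyValue_of_le hh]
  · have hnext : policyValue H Φ σ (h + 1) ≤ policyValue H Φ τ (h + 1) := fun t' =>
      ih t' τ ⟨hτ.2 (h + 1) h.lt_succ_self t', fun k hk => hτ.2 k (by omega)⟩
    calc policyValue H Φ σ h t
        = Φ h t (σ h t) (policyValue H Φ σ (h + 1)) := policyValue_of_lt hh t
      _ ≤ Φ h t (τ h t) (policyValue H Φ σ (h + 1)) := isMinOn_iff.1 (hσ h t) _ hτ.1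
      _ ≤ Φ h t (τ h t) (policyValue H Φ τ (h + 1)) := hmono h t _ hτ.1 hnext
      _ = policyValue H Φ τ h t := (policyValue_of_lt hh t).symm

end DynamicProgramming

section Game

variable {G : MarkovGame S n m} {RW : ℕ → S → Fin n → Fin m → ℝ}

variable (G RW) in
def stageValue (h : ℕ) (s : S) (p : Fin n → ℝ) (q : Fin m → ℝ) (V : S → ℝ) : ℝ :=
  ∑ a, ∑ b, p a * q b * (RW h s a b + ∑ s', G.P h s a b s' * V s')

theorem Val_of_lt {π : ℕ → S → Fin n → ℝ} {ν : ℕ → S → Fin m → ℝ} {h : ℕ} (hh : h < G.H)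
    (s : S) : Val G RW π ν h s = stageValue G RW h s (π h s) (ν h s) (Val G RW π ν (h + 1)) := by
  rw [Val, dif_pos hh]
  rfl

theorem Val_of_le {π : ℕ → S → Fin n → ℝ} {ν : ℕ → S → Fin m → ℝ} {h : ℕ} (hh : G.H ≤ h)
    (s : S) : Val G RW π ν h s = 0 := by
  rw [Val, dif_neg (not_lt.2 hh)]

theorem stageValue_mono {p : Fin n → ℝ} {q : Fin m → ℝ} (hp : p ∈ stdSimplex ℝ (Fin n))
    (hq : q ∈ stdSimplex ℝ (Fin m)) {h : ℕ} {s : S} : Monotone (stageValue G RW h s p q) := by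
  intro V V' hV
  unfold stageValue
  gcongr with a _ b _ s' _
  · exact mul_nonneg (hp.1 a) (hq.1 b)
  · exact G.P_nonneg h s a b s'
  · exact hV s'

theorem continuous_stageValue_left {h : ℕ} {s : S} {q : Fin m → ℝ} {V : S → ℝ} :
    Continuous fun p => stageValue G RW h s p q V := by
  unfold stageValue
  fun_prop

theorem continuous_stageValue_right {h : ℕ} {s : S} {p : Fin n → ℝ} {V : S → ℝ} :
    Continuous fun q => stageValue G RW h s p q V := by
  unfold stageValue
  fun_prop

theorem Val_eq_policyValue {X : Type*} (Φ : ℕ → S → X → (S → ℝ) → ℝ) (σ : ℕ → S → X)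
    (π : ℕ → S → Fin n → ℝ) (ν : ℕ → S → Fin m → ℝ)
    (hΦ : ∀ h s, Φ h s (σ h s) = stageValue G RW h s (π h s) (ν h s)) :
    Val G RW π ν = policyValue G.H Φ σ := by
  refine funext (backward_induction (H := G.H) (fun h hh => funext fun s => ?_)
    (fun h hh ih => funext fun s => ?_))
  · rw [Val_of_le hh, policyValue_of_le hh]
  · rw [Val_of_lt hh, policyValue_of_lt hh, ih, hΦ]

theorem exists_uniform_best_response {π : ℕ → S → Fin n → ℝ} (hπ : π ∈ ViP S n)
    (hE : (ExP S m).Nonempty) :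
    ∃ ν ∈ ExP S m, (∀ h s, IsMinOn (fun ν' => Val G RW π ν' h s) (ExP S m) ν) ∧
      ∀ h s, IsMinOn (fun q => stageValue G RW h s (π h s) q (Val G RW π ν (h + 1)))
        (stdSimplex ℝ (Fin m)) (ν h s) := by
  obtain ⟨ν₀, hν₀⟩ := hE
  set Φ : ℕ → S → (Fin m → ℝ) → (S → ℝ) → ℝ := fun h s q V => stageValue G RW h s (π h s) q V
  have hVal : ∀ ν, Val G RW π ν = policyValue G.H Φ ν := fun ν =>
    Val_eq_policyValue Φ ν π ν fun _ _ => rfl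
  obtain ⟨ν, hν⟩ := exists_isMinOn_policyValue (H := G.H) (Φ := Φ)
    (C := fun _ _ => stdSimplex ℝ (Fin m)) (fun _ _ => isCompact_stdSimplex ℝ (Fin m))
    (fun h s => ⟨ν₀ h s, hν₀ h s⟩) (fun _ _ _ => continuous_stageValue_right.continuousOn)
  refine ⟨ν, fun h s => (hν h s).1, fun h s => isMinOn_iff.2 fun ν' hν' => ?_,
    fun h s => by rw [hVal]; exact (hν h s).2⟩
  show Val G RW π ν h s ≤ Val G RW π ν' h s
  rw [hVal, hVal]
  exact policyValue_le_of_isMinOn (fun h s _ hq => stageValue_mono (hπ h s) hq)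
    (fun h s => (hν h s).2) h s ν' ⟨hν' h s, fun k _ s' => hν' k s'⟩

end Game

section Maximin

variable {G : MarkovGame S n m}

variable (G) in
noncomputable def worstCaseValue (π : ℕ → S → Fin n → ℝ) (h : ℕ) (s : S) : ℝ :=
  sInf ((fun ν => Val G G.R π ν h s) '' ExP S m)

theorem worstCaseValue_eq_Val {π : ℕ → S → Fin n → ℝ} {ν : ℕ → S → Fin m → ℝ}
    (hν : ν ∈ ExP S m) (hmin : ∀ h s, IsMinOn (fun ν' => Val G G.R π ν' h s) (ExP S m) ν) :
    worstCaseValue G π = Val G G.R π ν :=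
  funext fun h => funext fun s => (hmin h s).csInf_image_eq hν

theorem worstCaseValue_of_le {π : ℕ → S → Fin n → ℝ} (hE : (ExP S m).Nonempty) {h : ℕ}
    (hh : G.H ≤ h) (s : S) : worstCaseValue G π h s = 0 := by
  simp only [worstCaseValue, Val_of_le hh, hE.image_const, csInf_singleton]

theorem isLeast_worstCaseValue {π : ℕ → S → Fin n → ℝ} (hπ : π ∈ ViP S n)
    (hE : (ExP S m).Nonempty) {h : ℕ} (hh : h < G.H) (s : S) :
    IsLeast ((fun q => stageValue G G.R h s (π h s) q (worstCaseValue G π (h + 1))) ''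
      stdSimplex ℝ (Fin m)) (worstCaseValue G π h s) := by
  obtain ⟨ν, hν, hmin, hlocal⟩ := exists_uniform_best_response (RW := G.R) hπ hE
  rw [worstCaseValue_eq_Val hν hmin, Val_of_lt hh]
  exact (hlocal h s).isLeast_image (hν h s)

theorem sInf_sum_mul_Val_eq {π : ℕ → S → Fin n → ℝ} (hπ : π ∈ ViP S n)
    (hE : (ExP S m).Nonempty) {μ : S → ℝ} (hμ : ∀ s, 0 ≤ μ s) (h : ℕ) :
    sInf ((fun ν => ∑ s, μ s * Val G G.R π ν h s) '' ExP S m) =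
      ∑ s, μ s * worstCaseValue G π h s := by
  obtain ⟨ν, hν, hmin, -⟩ := exists_uniform_best_response (RW := G.R) hπ hE
  rw [(isMinOn_sum_mul hμ fun s => hmin h s).csInf_image_eq hν, worstCaseValue_eq_Val hν hmin]

theorem mem_piStar_iff {πs π : ℕ → S → Fin n → ℝ} {h : ℕ} {s : S} (hπs : πs ∈ PiStar G h s) :
    π ∈ PiStar G h s ↔ π ∈ ViP S n ∧ worstCaseValue G π h s = worstCaseValue G πs h s :=
  ⟨fun hπ => ⟨hπ.1, le_antisymm (hπs.2 π hπ.1) (hπ.2 πs hπs.1)⟩,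
    fun ⟨hπ, heq⟩ => ⟨hπ, fun π' hπ' => (hπs.2 π' hπ').trans_eq heq.symm⟩⟩

variable (G) in
def securingActions (V : ℕ → S → ℝ) (h : ℕ) (s : S) : Set (Fin n → ℝ) :=
  {p | p ∈ stdSimplex ℝ (Fin n) ∧
    (h < G.H → ∀ q ∈ stdSimplex ℝ (Fin m), V h s ≤ stageValue G G.R h s p q (V (h + 1)))}

theorem isCompact_securingActions {V : ℕ → S → ℝ} {h : ℕ} {s : S} :
    IsCompact (securingActions G V h s) := by
  refine (isCompact_stdSimplex ℝ (Fin n)).of_isClosed_subset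
    ((isClosed_stdSimplex ℝ (Fin n)).inter (isClosed_imp isOpen_const ?_)) fun p hp => hp.1
  simp only [Set.ofPred_forall]
  exact isClosed_iInter fun q => isClosed_iInter fun _ =>
    isClosed_le continuous_const continuous_stageValue_left

theorem worstCaseValue_eq_iff_mem_securingActions {πs π : ℕ → S → Fin n → ℝ} {h : ℕ} {s : S}
    (hπs : πs ∈ PiStar G h s) (hπ : π ∈ ViP S n) (hE : (ExP S m).Nonempty) (hh : h < G.H)
    (hnext : worstCaseValue G π (h + 1) = worstCaseValue G πs (h + 1)) :
    worstCaseValue G π h s = worstCaseValue G πs h s ↔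
      π h s ∈ securingActions G (worstCaseValue G πs) h s := by
  have hleast := isLeast_worstCaseValue hπ hE hh s
  rw [hnext] at hleast
  refine ⟨fun heq => ⟨hπ h s, fun _ q hq => heq ▸ hleast.2 ⟨q, hq, rfl⟩⟩, fun hp => ?_⟩
  obtain ⟨q, hq, hqeq⟩ := hleast.1
  exact le_antisymm (hπs.2 π hπ) (hqeq ▸ hp.2 hh q hq)

theorem mem_securingActions_of_mem_piStar {πs π : ℕ → S → Fin n → ℝ}
    (hπs : ∀ h s, πs ∈ PiStar G h s) (hE : (ExP S m).Nonempty) {h : ℕ} {s : S}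
    (hπ : π ∈ PiStar G h s) (hnext : ∀ s', π ∈ PiStar G (h + 1) s') :
    π h s ∈ securingActions G (worstCaseValue G πs) h s := by
  by_cases hh : h < G.H
  · refine (worstCaseValue_eq_iff_mem_securingActions (hπs h s) hπ.1 hE hh ?_).1
      ((mem_piStar_iff (hπs h s)).1 hπ).2
    exact funext fun s' => ((mem_piStar_iff (hπs _ s')).1 (hnext s')).2
  · exact ⟨hπ.1 h s, fun hlt => absurd hlt hh⟩

theorem mem_piStar_of_forall_mem_securingActions {πs π : ℕ → S → Fin n → ℝ}
    (hπs : ∀ h s, πs ∈ PiStar G h s) (hE : (ExP S m).Nonempty)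
    (hπ : ∀ h s, π h s ∈ securingActions G (worstCaseValue G πs) h s) (h : ℕ) (s : S) :
    π ∈ PiStar G h s := by
  have hV : π ∈ ViP S n := fun h s => (hπ h s).1
  have hW : ∀ h, worstCaseValue G π h = worstCaseValue G πs h := by
    refine backward_induction (H := G.H) (fun h hh => funext fun s => ?_)
      (fun h hh ih => funext fun s => ?_)
    · rw [worstCaseValue_of_le hE hh, worstCaseValue_of_le hE hh]
    · exact (worstCaseValue_eq_iff_mem_securingActions (hπs h s) hV hE hh ih).2 (hπ h s)
  exact (mem_piStar_iff (hπs h s)).2 ⟨hV, congrFun (hW h) s⟩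

theorem isAdmissibleFrom_of_mem_tildePi {πs π : ℕ → S → Fin n → ℝ}
    (hπs : ∀ h s, πs ∈ PiStar G h s) (hE : (ExP S m).Nonempty) {h : ℕ} {s : S}
    (hπ : π ∈ TildePi G h s) :
    IsAdmissibleFrom (securingActions G (worstCaseValue G πs)) h s π := by
  have hlater : ∀ k > h, ∀ s', π ∈ PiStar G k s' := by
    simpa only [Set.mem_iInter] using hπ.2
  exact ⟨mem_securingActions_of_mem_piStar hπs hE hπ.1 (hlater (h + 1) h.lt_succ_self),
    fun k hk s' => mem_securingActions_of_mem_piStar hπs hE (hlater k hk s')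
      (hlater (k + 1) (by omega))⟩

theorem iInter_piStar_subset_tildePi (h : ℕ) (s : S) :
    ⋂ (k : ℕ) (s' : S), PiStar G k s' ⊆ TildePi G h s := fun _ hπ =>
  ⟨Set.mem_iInter₂.1 hπ h s,
    Set.mem_iInter₂.2 fun k _ => Set.mem_iInter.2 (Set.mem_iInter₂.1 hπ k)⟩

theorem exists_mem_iInter_piStar_isMinOn_tildePi {πs : ℕ → S → Fin n → ℝ}
    {ν : ℕ → S → Fin m → ℝ} (hπs : ∀ h s, πs ∈ PiStar G h s) (hν : ν ∈ ExP S m) :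
    ∃ π ∈ ⋂ (h : ℕ) (s : S), PiStar G h s,
      ∀ h s, IsMinOn (fun π' => Val G G.Re π' ν h s) (TildePi G h s) π := by
  have hE : (ExP S m).Nonempty := ⟨ν, hν⟩
  set Φ : ℕ → S → (Fin n → ℝ) → (S → ℝ) → ℝ := fun h s p V => stageValue G G.Re h s p (ν h s) V
  have hVal : ∀ π, Val G G.Re π ν = policyValue G.H Φ π := fun π =>
    Val_eq_policyValue Φ π π ν fun _ _ => rfl
  obtain ⟨π, hπ⟩ := exists_isMinOn_policyValue (H := G.H) (Φ := Φ)
    (C := securingActions G (worstCaseValue G πs)) (fun _ _ => isCompact_securingActions)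
    (fun h s => ⟨πs h s, mem_securingActions_of_mem_piStar hπs hE (hπs h s) (hπs (h + 1))⟩)
    (fun _ _ _ => continuous_stageValue_left.continuousOn)
  refine ⟨π, Set.mem_iInter₂.2 (mem_piStar_of_forall_mem_securingActions hπs hE fun h s =>
    (hπ h s).1), fun h s => isMinOn_iff.2 fun π' hπ' => ?_⟩
  show Val G G.Re π ν h s ≤ Val G G.Re π' ν h s
  rw [hVal, hVal]
  exact policyValue_le_of_isMinOn (fun _ _ _ hp => stageValue_mono hp.1 (hν _ _))
    (fun h s => (hπ h s).2) h s π' (isAdmissibleFrom_of_mem_tildePi hπs hE hπ')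

end Maximin

theorem MPVISER_is_VISER_general (G : MarkovGame S n m)
    (μ : S → ℝ) (hμ0 : ∀ s, 0 ≤ μ s)
    (πs : ℕ → S → Fin n → ℝ) (νs : ℕ → S → Fin m → ℝ)
    (hπ : ∀ h s, πs ∈ PiStar G h s) (hν : ∀ h s, νs ∈ NStar G h s) :
    (πs ∈ ViP S n ∧ ∀ π' ∈ ViP S n,
      sInf ((fun ν => ∑ s, μ s * Val G G.R π' ν 0 s) '' ExP S m) ≤
        sInf ((fun ν => ∑ s, μ s * Val G G.R πs ν 0 s) '' ExP S m)) ∧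
    (νs ∈ ExP S m ∧ ∀ ν' ∈ ExP S m,
      sInf ((fun π => ∑ s, μ s * Val G G.Re π ν' 0 s) ''
          (⋂ (h : ℕ) (s : S), PiStar G h s)) ≤
        sInf ((fun π => ∑ s, μ s * Val G G.Re π νs 0 s) ''
          (⋂ (h : ℕ) (s : S), PiStar G h s))) := by
  have hπs : πs ∈ ViP S n := fun h s => (hπ h s).1 h s
  have hνs : νs ∈ ExP S m := fun h s => (hν h s).1 h s
  refine ⟨⟨hπs, fun π' hπ' => ?_⟩, ⟨hνs, fun ν' hν' => ?_⟩⟩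
  · rw [sInf_sum_mul_Val_eq hπ' ⟨νs, hνs⟩ hμ0, sInf_sum_mul_Val_eq hπs ⟨νs, hνs⟩ hμ0]
    exact Finset.sum_le_sum fun s _ => mul_le_mul_of_nonneg_left ((hπ 0 s).2 π' hπ') (hμ0 s)
  · obtain ⟨π', hπ'K, hπ'min⟩ := exists_mem_iInter_piStar_isMinOn_tildePi hπ hν'
    obtain ⟨π, hπK, hπmin⟩ := exists_mem_iInter_piStar_isMinOn_tildePi hπ hνs
    have hsub := iInter_piStar_subset_tildePi (G := G) 0
    rw [(isMinOn_sum_mul hμ0 fun s => (hπ'min 0 s).on_subset (hsub s)).csInf_image_eq hπ'K,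
      (isMinOn_sum_mul hμ0 fun s => (hπmin 0 s).on_subset (hsub s)).csInf_image_eq hπK]
    refine Finset.sum_le_sum fun s _ => mul_le_mul_of_nonneg_left ?_ (hμ0 s)
    have hN := (hν 0 s).2 ν' hν'
    rwa [(hπ'min 0 s).csInf_image_eq (hsub s hπ'K),
      (hπmin 0 s).csInf_image_eq (hsub s hπK)] at hN

/-- a Markov-perfect VISER pair `(π*, ν*)` (VISER at every stage game)
is a VISER solution of the whole game from the initial distribution `μ`: `π*`
maximizes the victim's worst-case value and `ν*` best-responds in the worst case
to the set of Markov-perfect maximin victim policies. -/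
theorem MPVISER_is_VISER (G : MarkovGame S n m)
    (hn : 0 < n) (hm : 0 < m)
    (μ : S → ℝ) (hμ0 : ∀ s, 0 ≤ μ s) (hμ1 : ∑ s, μ s = 1)
    (πs : ℕ → S → Fin n → ℝ) (νs : ℕ → S → Fin m → ℝ)
    (hπ : ∀ h s, πs ∈ PiStar G h s) (hν : ∀ h s, νs ∈ NStar G h s) :
    (πs ∈ ViP S n ∧ ∀ π' ∈ ViP S n,
      sInf ((fun ν => ∑ s, μ s * Val G G.R π' ν 0 s) '' ExP S m) ≤
        sInf ((fun ν => ∑ s, μ s * Val G G.R πs ν 0 s) '' ExP S m)) ∧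
    (νs ∈ ExP S m ∧ ∀ ν' ∈ ExP S m,
      sInf ((fun π => ∑ s, μ s * Val G G.Re π ν' 0 s) ''
          (⋂ (h : ℕ) (s : S), PiStar G h s)) ≤
        sInf ((fun π => ∑ s, μ s * Val G G.Re π νs 0 s) ''
          (⋂ (h : ℕ) (s : S), PiStar G h s))) :=
  MPVISER_is_VISER_general G μ hμ0 πs νs hπ hν
end
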